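/- arXiv:1306.4649 — 2 statements merged into one kernel-verified Lean document; each statement's English description precedes it below -/
import Mathlib

section
/- Let A be an n×n real symmetric positive definite matrix and B an (n−1)×(n−1) principal submatrix of A whose eigenvalues interlace those of A. Then the smallest eigenvalue of A satisfies λ_n(A) ≤ 1/(tr(A⁻¹) − tr(B⁻¹)). -/
/-!
Let `s = A i i - r B⁻¹ c` be the Schur complement of `B` in `A`, where `r` and `c` are row and
column `i` of `A` with the diagonal entry removed, and let `v` (resp. `u`) be the vector with
`i`-th entry `1` and remaining entries `-B⁻¹ c` (resp. `-r B⁻¹`). Then `A v = s eᵢ` and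
`A (B⁻¹ ⊕ 0) = 1 - eᵢ uᵀ`, so `A⁻¹ = (B⁻¹ ⊕ 0) + s⁻¹ v uᵀ` and
`tr A⁻¹ - tr B⁻¹ = (u ⬝ v) / s`. For symmetric `A` we have `u = v`, and the Rayleigh bound
`λ_min ‖v‖² ≤ vᵀ A v = s` is exactly the claim.
-/

namespace Matrix

section InsertNth
variable {R : Type*} {n : ℕ}

def insertZeroRowCol [Zero R] (i : Fin (n + 1)) (C : Matrix (Fin n) (Fin n) R) :
    Matrix (Fin (n + 1)) (Fin (n + 1)) R :=
  of (i.insertNth 0 fun k => i.insertNth 0 (C k))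

variable [NonUnitalNonAssocSemiring R] (i : Fin (n + 1))

theorem dotProduct_insertNth (u : Fin (n + 1) → R) (x : R) (w : Fin n → R) :
    u ⬝ᵥ i.insertNth x w = u i * x + (u ∘ i.succAbove) ⬝ᵥ w := by
  simp [dotProduct, Fin.sum_univ_succAbove _ i]

theorem trace_insertZeroRowCol (C : Matrix (Fin n) (Fin n) R) :
    (insertZeroRowCol i C).trace = C.trace := by
  simp [insertZeroRowCol, trace, Fin.sum_univ_succAbove _ i]

theorem mul_insertZeroRowCol_apply (A : Matrix (Fin (n + 1)) (Fin (n + 1)) R)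
    (C : Matrix (Fin n) (Fin n) R) (k : Fin (n + 1)) :
    (A * insertZeroRowCol i C) k = i.insertNth 0 ((A k ∘ i.succAbove) ᵥ* C) := by
  ext l
  induction l using i.succAboveCases <;>
    simp [insertZeroRowCol, mul_apply, vecMul, dotProduct, Fin.sum_univ_succAbove _ i]

end InsertNth

section Schur
variable {K : Type*} [Field K] {n : ℕ} (A : Matrix (Fin (n + 1)) (Fin (n + 1)) K) (i : Fin (n + 1))

noncomputable def schurComplementAt : K :=
  A i i - (A i ∘ i.succAbove) ⬝ᵥ (A.submatrix i.succAbove i.succAbove)⁻¹ *ᵥ (Aᵀ i ∘ i.succAbove)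

noncomputable def schurRightVec : Fin (n + 1) → K :=
  i.insertNth 1 (-((A.submatrix i.succAbove i.succAbove)⁻¹ *ᵥ (Aᵀ i ∘ i.succAbove)))

noncomputable def schurLeftVec : Fin (n + 1) → K :=
  i.insertNth 1 (-((A i ∘ i.succAbove) ᵥ* (A.submatrix i.succAbove i.succAbove)⁻¹))

@[simp]
theorem schurRightVec_apply_self : schurRightVec A i i = 1 := Fin.insertNth_apply_same _ _ _

theorem schurRightVec_ne_zero : schurRightVec A i ≠ 0 :=
  fun h => by simpa using congrFun h i

variable {A}

theorem schurLeftVec_eq_schurRightVec (hA : A.IsSymm) : schurLeftVec A i = schurRightVec A i := by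
  rw [schurLeftVec, schurRightVec, ← mulVec_transpose,
    ((hA.submatrix i.succAbove).inv).eq, hA.eq]

variable (hB : IsUnit (A.submatrix i.succAbove i.succAbove).det)
include hB

theorem mulVec_schurRightVec :
    A *ᵥ schurRightVec A i = Pi.single i (schurComplementAt A i) := by
  ext k
  induction k using i.succAboveCases with
  | x =>
    rw [mulVec, schurRightVec, dotProduct_insertNth, dotProduct_neg, Pi.single_eq_same]
    simp [schurComplementAt, sub_eq_add_neg]
  | p k =>
    have hcol : (A (i.succAbove k) ∘ i.succAbove) ⬝ᵥ
        (A.submatrix i.succAbove i.succAbove)⁻¹ *ᵥ (Aᵀ i ∘ i.succAbove) = A (i.succAbove k) i := by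
      change (A.submatrix i.succAbove i.succAbove *ᵥ _ *ᵥ _) k = _
      rw [mulVec_mulVec, mul_nonsing_inv _ hB, one_mulVec]
      rfl
    rw [Pi.single_eq_of_ne (Fin.succAbove_ne i k), mulVec, schurRightVec, dotProduct_insertNth,
      dotProduct_neg, hcol, mul_one, add_neg_cancel]

theorem mul_insertZeroRowCol_inv_submatrix :
    A * insertZeroRowCol i (A.submatrix i.succAbove i.succAbove)⁻¹ =
      1 - vecMulVec (Pi.single i 1) (schurLeftVec A i) := by
  funext k
  rw [mul_insertZeroRowCol_apply]
  induction k using i.succAboveCases with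
  | x =>
    ext l
    induction l using i.succAboveCases <;> simp [schurLeftVec, vecMulVec]
  | p k =>
    have hrow : (A (i.succAbove k) ∘ i.succAbove) ᵥ* (A.submatrix i.succAbove i.succAbove)⁻¹ =
        (1 : Matrix (Fin n) (Fin n) K) k := by
      rw [← mul_nonsing_inv _ hB]; rfl
    ext l
    induction l using i.succAboveCases <;> simp [hrow, vecMulVec, one_apply]

theorem schurRightVec_dotProduct_mulVec :
    schurRightVec A i ⬝ᵥ A *ᵥ schurRightVec A i = schurComplementAt A i := by
  rw [mulVec_schurRightVec i hB, dotProduct_single, schurRightVec_apply_self, one_mul]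

theorem inv_eq_insertZeroRowCol_add (hs : schurComplementAt A i ≠ 0) :
    A⁻¹ = insertZeroRowCol i (A.submatrix i.succAbove i.succAbove)⁻¹ +
      (schurComplementAt A i)⁻¹ • vecMulVec (schurRightVec A i) (schurLeftVec A i) := by
  refine inv_eq_right_inv ?_
  rw [mul_add, Matrix.mul_smul, mul_vecMulVec, mulVec_schurRightVec i hB,
    mul_insertZeroRowCol_inv_submatrix i hB, ← smul_vecMulVec, ← Pi.single_smul, smul_eq_mul,
    inv_mul_cancel₀ hs, sub_add_cancel]

theorem trace_inv_sub_trace_inv_submatrix (hs : schurComplementAt A i ≠ 0) :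
    A⁻¹.trace - (A.submatrix i.succAbove i.succAbove)⁻¹.trace =
      schurRightVec A i ⬝ᵥ schurLeftVec A i / schurComplementAt A i := by
  rw [inv_eq_insertZeroRowCol_add i hB hs, trace_add, trace_insertZeroRowCol, trace_smul,
    trace_vecMulVec, smul_eq_mul, add_sub_cancel_left, inv_mul_eq_div]

end Schur

open scoped MatrixOrder ComplexOrder

theorem IsHermitian.iInf_eigenvalues_mul_dotProduct_le {𝕜 : Type*} [RCLike 𝕜] {m : Type*}
    [Fintype m] [DecidableEq m] [Nonempty m] {A : Matrix m m 𝕜}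
    (hA : A.IsHermitian) (v : m → 𝕜) :
    ((⨅ j, hA.eigenvalues j : ℝ) : 𝕜) * (star v ⬝ᵥ v) ≤ star v ⬝ᵥ A *ᵥ v := by
  have hle : algebraMap ℝ (Matrix m m 𝕜) (⨅ j, hA.eigenvalues j) ≤ A := by
    rw [algebraMap_le_iff_le_spectrum hA.isSelfAdjoint, hA.spectrum_real_eq_range_eigenvalues]
    rintro _ ⟨j, rfl⟩
    exact ciInf_le (Finite.bddBelow_range _) j
  have := (le_iff.mp hle).dotProduct_mulVec_nonneg v
  rw [sub_mulVec, dotProduct_sub, sub_nonneg, Algebra.algebraMap_eq_smul_one, smul_mulVec,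
    one_mulVec, dotProduct_smul] at this
  simpa [RCLike.real_smul_eq_coe_mul] using this

end Matrix

open Matrix

/-- If `A` is positive definite and `B` is a principal submatrix obtained by deleting a row and
the corresponding column, then the smallest eigenvalue of `A` is at most
`1 / (tr A⁻¹ - tr B⁻¹)`. -/
theorem min_eigenvalue_le_inv_trace_diff {n : ℕ}
    (A : Matrix (Fin (n + 1)) (Fin (n + 1)) ℝ) (hHerm : A.IsHermitian) (hA : A.PosDef)
    (i : Fin (n + 1)) (B : Matrix (Fin n) (Fin n) ℝ)
    (hB : B = A.submatrix i.succAbove i.succAbove) (hBpd : B.PosDef) :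
    (⨅ j, hHerm.eigenvalues j) ≤ 1 / (A⁻¹.trace - B⁻¹.trace) := by
  subst hB
  have hBdet : IsUnit (A.submatrix i.succAbove i.succAbove).det :=
    (isUnit_iff_isUnit_det _).mp hBpd.isUnit
  have hAv := schurRightVec_dotProduct_mulVec i hBdet
  have hs : 0 < schurComplementAt A i := by
    simpa [hAv] using hA.dotProduct_mulVec_pos (schurRightVec_ne_zero A i)
  have hvv : 0 < schurRightVec A i ⬝ᵥ schurRightVec A i := by
    simpa using dotProduct_self_star_pos_iff.mpr (schurRightVec_ne_zero A i)
  rw [trace_inv_sub_trace_inv_submatrix i hBdet hs.ne',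
    schurLeftVec_eq_schurRightVec i (isHermitian_iff_isSymm.mp hHerm), one_div_div,
    le_div_iff₀ hvv, ← hAv]
  simpa using hHerm.iInf_eigenvalues_mul_dotProduct_le (schurRightVec A i)
end

section
/- Let A be an n×n real symmetric matrix all of whose eigenvalues lie in the open interval (−2, ∞). Then for any principal submatrix B obtained from A by deleting one row and corresponding column, all eigenvalues of 2I + B are positive, and tr((2I_n + A)⁻¹) − tr((2I_{n−1} + B)⁻¹) > 0, and the smallest eigenvalue μ of 2I + A satisfies 1/tr((2I_n + A)⁻¹) ≤ μ ≤ 1/(tr((2I_n + A)⁻¹) − tr((2I_{n−1} + B)⁻¹)). -/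
/-!
Write `M = 2I + A`; its quadratic form is at least `(2 + λ_min(A)) |x|²`, so `M` is positive
definite. Let `x` be the `i`-th column of `M⁻¹`. Deleting row and column `i` changes the inverse by
a rank-one term, `(M_{-i})⁻¹ = (M⁻¹ - x xᵀ / xᵢ)_{-i}`, so taking traces gives
`tr M⁻¹ - tr (M_{-i})⁻¹ = |x|² / xᵢ > 0`. Since `M x = eᵢ`, the Rayleigh quotient of `x` is
`xᵢ / |x|²`, which bounds `μ` from above. The lower bound is `tr M⁻¹ ≥ λ_max(M⁻¹) = 1 / μ`.
-/

open Matrix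
open scoped MatrixOrder

namespace Matrix

section

variable {n : Type*} [Fintype n]

theorem IsHermitian.mul_dotProduct_self_le [DecidableEq n] {A : Matrix n n ℝ}
    (hA : A.IsHermitian) {c : ℝ} (hc : ∀ j, c ≤ hA.eigenvalues j) (x : n → ℝ) :
    c * (x ⬝ᵥ x) ≤ x ⬝ᵥ A *ᵥ x := by
  have hle : algebraMap ℝ (Matrix n n ℝ) c ≤ A := by
    rw [algebraMap_le_iff_le_spectrum hA.isSelfAdjoint, hA.spectrum_real_eq_range_eigenvalues]
    rintro _ ⟨j, rfl⟩
    exact hc j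
  simpa [sub_mulVec, algebraMap_eq_diagonal, Pi.algebraMap_def] using
    (le_iff.mp hle).dotProduct_mulVec_nonneg x

theorem IsHermitian.posDef_smul_one_add [DecidableEq n] {A : Matrix n n ℝ}
    (hA : A.IsHermitian) {c : ℝ} (hc : ∀ j, -c < hA.eigenvalues j) : (c • 1 + A).PosDef := by
  refine .of_dotProduct_mulVec_pos ((isHermitian_one.smul (IsSelfAdjoint.all c)).add hA)
    fun x hx => ?_
  obtain ⟨j, -⟩ := Function.ne_iff.mp hx
  have : Nonempty n := ⟨j⟩
  obtain ⟨j₀, hj₀⟩ := Finite.exists_min hA.eigenvalues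
  have hxx : 0 < x ⬝ᵥ x := by simpa only [star_trivial] using dotProduct_star_self_pos_iff.mpr hx
  have hray := hA.mul_dotProduct_self_le hj₀ x
  simp only [star_trivial, add_mulVec, smul_mulVec, one_mulVec, dotProduct_add, dotProduct_smul,
    smul_eq_mul]
  nlinarith [hc j₀]

theorem PosSemidef.eigenvalues_le_trace [DecidableEq n] {A : Matrix n n ℝ}
    (hA : A.PosSemidef) (j : n) : hA.1.eigenvalues j ≤ A.trace := by
  rw [hA.1.trace_eq_sum_eigenvalues]
  exact Finset.single_le_sum (fun k _ => hA.eigenvalues_nonneg k) (Finset.mem_univ j)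

theorem PosDef.inv_eigenvalues_mem_spectrum_inv [DecidableEq n] {A : Matrix n n ℝ}
    (hA : A.PosDef) (j : n) : (hA.1.eigenvalues j)⁻¹ ∈ spectrum ℝ A⁻¹ := by
  have hunit : ((hA.isUnit.unit⁻¹ : (Matrix n n ℝ)ˣ) : Matrix n n ℝ) = A⁻¹ := by
    rw [coe_units_inv]
    rfl
  simpa [hunit] using (spectrum.inv_mem_iff (r := Units.mk0 _ (hA.eigenvalues_pos j).ne')
    (a := hA.isUnit.unit)).mp (hA.1.eigenvalues_mem_spectrum_real j)

theorem PosDef.inv_eigenvalues_le_trace_inv [DecidableEq n] {A : Matrix n n ℝ}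
    (hA : A.PosDef) (j : n) : (hA.1.eigenvalues j)⁻¹ ≤ A⁻¹.trace := by
  obtain ⟨k, hk⟩ :=
    hA.inv.1.spectrum_real_eq_range_eigenvalues ▸ hA.inv_eigenvalues_mem_spectrum_inv j
  exact hk ▸ hA.inv.posSemidef.eigenvalues_le_trace k

theorem PosDef.one_div_trace_inv_le_eigenvalues [DecidableEq n] {A : Matrix n n ℝ}
    (hA : A.PosDef) (j : n) : 1 / A⁻¹.trace ≤ hA.1.eigenvalues j := by
  have hj := hA.eigenvalues_pos j
  have hle := hA.inv_eigenvalues_le_trace_inv j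
  rw [one_div]
  exact (inv_le_comm₀ hj ((inv_pos.2 hj).trans_le hle)).mp hle

theorem IsHermitian.mul_self_apply_self {P : Matrix n n ℝ} (hP : P.IsHermitian) (i : n) :
    (P * P) i i = P.col i ⬝ᵥ P.col i := by
  rw [mul_apply, dotProduct]
  refine Finset.sum_congr rfl fun j _ => ?_
  rw [col_apply, ← hP.apply j i, star_trivial]

theorem col_inv_dotProduct_mulVec_col_inv [DecidableEq n] {R : Type*} [CommRing R]
    {M : Matrix n n R} (hM : IsUnit M.det) (i : n) : M⁻¹.col i ⬝ᵥ M *ᵥ M⁻¹.col i = M⁻¹ i i := by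
  rw [← mulVec_single_one, mulVec_mulVec, mul_nonsing_inv _ hM, one_mulVec,
    dotProduct_single_one, mulVec_single_one, col_apply]

end

section

variable {K : Type*} [Field K] {n : ℕ}

theorem trace_submatrix_succAbove {R : Type*} [AddCommGroup R]
    (X : Matrix (Fin (n + 1)) (Fin (n + 1)) R) (i : Fin (n + 1)) :
    (X.submatrix i.succAbove i.succAbove).trace = X.trace - X i i := by
  simp [trace, Fin.sum_univ_succAbove _ i]

theorem sum_mul_succAbove_of_mul_eq_one {M P : Matrix (Fin (n + 1)) (Fin (n + 1)) K}
    (h : M * P = 1) (i a b : Fin (n + 1)) :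
    ∑ l, M a (i.succAbove l) * P (i.succAbove l) b = (1 : Matrix _ _ K) a b - M a i * P i b := by
  rw [← h, mul_apply, Fin.sum_univ_succAbove _ i]
  ring

theorem inv_submatrix_succAbove {M : Matrix (Fin (n + 1)) (Fin (n + 1)) K} (hM : IsUnit M.det)
    {i : Fin (n + 1)} (hi : M⁻¹ i i ≠ 0) :
    (M.submatrix i.succAbove i.succAbove)⁻¹ =
      (M⁻¹ - (M⁻¹ i i)⁻¹ • vecMulVec (M⁻¹.col i) (M⁻¹ i)).submatrix
        i.succAbove i.succAbove := by
  have hMP := sum_mul_succAbove_of_mul_eq_one (mul_nonsing_inv M hM) i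
  refine inv_eq_right_inv (ext fun j k => ?_)
  simp only [mul_apply, submatrix_apply, sub_apply, smul_apply, vecMulVec_apply, col_apply,
    smul_eq_mul, mul_sub, Finset.sum_sub_distrib]
  have hpull : ∀ l, M (i.succAbove j) (i.succAbove l) *
      ((M⁻¹ i i)⁻¹ * (M⁻¹ (i.succAbove l) i * M⁻¹ i (i.succAbove k))) =
      (M⁻¹ i i)⁻¹ * M⁻¹ i (i.succAbove k) *
        (M (i.succAbove j) (i.succAbove l) * M⁻¹ (i.succAbove l) i) :=
    fun l => by ring
  rw [Finset.sum_congr rfl fun l _ => hpull l, ← Finset.mul_sum, hMP, hMP,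
    one_apply_ne (i.succAbove_ne j)]
  simp only [one_apply, i.succAbove_right_inj]
  field_simp
  ring

theorem trace_inv_sub_trace_inv_submatrix_succAbove
    {M : Matrix (Fin (n + 1)) (Fin (n + 1)) K} (hM : IsUnit M.det) {i : Fin (n + 1)}
    (hi : M⁻¹ i i ≠ 0) :
    M⁻¹.trace - (M.submatrix i.succAbove i.succAbove)⁻¹.trace = (M⁻¹ * M⁻¹) i i / M⁻¹ i i := by
  rw [inv_submatrix_succAbove hM hi, trace_submatrix_succAbove, trace_sub, trace_smul,
    trace_vecMulVec, mul_apply]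
  simp only [sub_apply, smul_apply, vecMulVec_apply, col_apply, smul_eq_mul, dotProduct]
  field_simp
  simp only [sub_self, mul_zero, sub_zero, sub_sub_cancel]
  exact Finset.sum_congr rfl fun _ _ => mul_comm _ _

theorem PosDef.trace_inv_sub_trace_inv_submatrix_succAbove
    {M : Matrix (Fin (n + 1)) (Fin (n + 1)) ℝ} (hM : M.PosDef) (i : Fin (n + 1)) :
    M⁻¹.trace - (M.submatrix i.succAbove i.succAbove)⁻¹.trace =
      M⁻¹.col i ⬝ᵥ M⁻¹.col i / M⁻¹ i i := by
  rw [Matrix.trace_inv_sub_trace_inv_submatrix_succAbove hM.det_pos.ne'.isUnit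
    hM.inv.diag_pos.ne', hM.inv.1.mul_self_apply_self]

theorem PosDef.dotProduct_col_inv_pos {M : Matrix (Fin (n + 1)) (Fin (n + 1)) ℝ}
    (hM : M.PosDef) (i : Fin (n + 1)) : 0 < M⁻¹.col i ⬝ᵥ M⁻¹.col i := by
  have hcol : M⁻¹.col i ≠ 0 := fun h => hM.inv.diag_pos.ne' (congrFun h i)
  simpa only [star_trivial] using dotProduct_star_self_pos_iff.mpr hcol

theorem PosDef.trace_inv_sub_trace_inv_submatrix_succAbove_pos
    {M : Matrix (Fin (n + 1)) (Fin (n + 1)) ℝ} (hM : M.PosDef) (i : Fin (n + 1)) :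
    0 < M⁻¹.trace - (M.submatrix i.succAbove i.succAbove)⁻¹.trace := by
  rw [hM.trace_inv_sub_trace_inv_submatrix_succAbove]
  exact div_pos (hM.dotProduct_col_inv_pos i) hM.inv.diag_pos

theorem PosDef.le_one_div_trace_inv_sub_trace_inv_submatrix_succAbove
    {M : Matrix (Fin (n + 1)) (Fin (n + 1)) ℝ} (hM : M.PosDef) (i : Fin (n + 1)) {c : ℝ}
    (hc : ∀ j, c ≤ hM.1.eigenvalues j) :
    c ≤ 1 / (M⁻¹.trace - (M.submatrix i.succAbove i.succAbove)⁻¹.trace) := by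
  rw [hM.trace_inv_sub_trace_inv_submatrix_succAbove, one_div_div,
    le_div_iff₀ (hM.dotProduct_col_inv_pos i),
    ← col_inv_dotProduct_mulVec_col_inv hM.det_pos.ne'.isUnit]
  exact hM.1.mul_dotProduct_self_le hc _

end

end Matrix

/-- Let `A` be real symmetric with all eigenvalues `> -2` and `B` a principal submatrix of `A`
obtained by deleting one row and the corresponding column. Then `2I + B` is positive definite,
`tr((2I + A)⁻¹) - tr((2I + B)⁻¹) > 0`, and the smallest eigenvalue `μ` of `2I + A` satisfies
`1 / tr((2I + A)⁻¹) ≤ μ ≤ 1 / (tr((2I + A)⁻¹) - tr((2I + B)⁻¹))`. -/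
theorem algebraic_connectivity_bounds {n : ℕ}
    (A : Matrix (Fin (n + 1)) (Fin (n + 1)) ℝ) (hA : A.IsHermitian)
    (hev : ∀ j, -2 < hA.eigenvalues j) (i : Fin (n + 1))
    (B : Matrix (Fin n) (Fin n) ℝ) (hB : B = A.submatrix i.succAbove i.succAbove)
    (h2A : ((2 : ℝ) • (1 : Matrix (Fin (n + 1)) (Fin (n + 1)) ℝ) + A).IsHermitian)
    (μ : ℝ) (hμ : μ = ⨅ j, h2A.eigenvalues j) :
    ((2 : ℝ) • (1 : Matrix (Fin n) (Fin n) ℝ) + B).PosDef ∧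
    0 < ((2 : ℝ) • (1 : Matrix (Fin (n + 1)) (Fin (n + 1)) ℝ) + A)⁻¹.trace -
        ((2 : ℝ) • (1 : Matrix (Fin n) (Fin n) ℝ) + B)⁻¹.trace ∧
    1 / ((2 : ℝ) • (1 : Matrix (Fin (n + 1)) (Fin (n + 1)) ℝ) + A)⁻¹.trace ≤ μ ∧
    μ ≤ 1 / (((2 : ℝ) • (1 : Matrix (Fin (n + 1)) (Fin (n + 1)) ℝ) + A)⁻¹.trace -
        ((2 : ℝ) • (1 : Matrix (Fin n) (Fin n) ℝ) + B)⁻¹.trace) := by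
  set M := (2 : ℝ) • (1 : Matrix (Fin (n + 1)) (Fin (n + 1)) ℝ) + A
  have hN : (2 : ℝ) • 1 + B = M.submatrix i.succAbove i.succAbove := by
    rw [hB, ← submatrix_one _ Fin.succAbove_right_injective]
    rfl
  have hM : M.PosDef := hA.posDef_smul_one_add hev
  obtain ⟨j₀, hj₀⟩ := exists_eq_ciInf_of_finite (f := h2A.eigenvalues)
  have hμ_le : ∀ j, μ ≤ h2A.eigenvalues j := fun j => hμ ▸ ciInf_le (Finite.bddBelow_range _) j
  rw [hN]
  exact ⟨hM.submatrix Fin.succAbove_right_injective,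
    hM.trace_inv_sub_trace_inv_submatrix_succAbove_pos i,
    hμ ▸ hj₀ ▸ hM.one_div_trace_inv_le_eigenvalues j₀,
    hM.le_one_div_trace_inv_sub_trace_inv_submatrix_succAbove i hμ_le⟩
end
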